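/- arXiv:1810.10082 — 2 statements merged into one kernel-verified Lean document; each statement's English description precedes it below -/
import Mathlib

section
/- For any real symmetric positive semidefinite p×p matrix X, exp(-2X) + X^+ (I - exp(-X))^2 ⪯ 1.2147 · (I+X)^{-1} in the Loewner order. -/
open Matrix

noncomputable def pinvFun (s : ℝ) : ℝ := if s = 0 then 0 else s⁻¹

-- helper: upper bound on exp c via exp(c/8)
lemma exp_le_aux (c u : ℝ) (h0 : 0 ≤ c) (h8 : c ≤ 8)
    (hu : ∑ i ∈ Finset.range 8, (c/8)^i / (Nat.factorial i) + (c/8)^8 * (9/(40320*8)) ≤ u) :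
    Real.exp c ≤ u^8 := by
  have hx : |c/8| ≤ 1 := by rw [abs_of_nonneg (by linarith)]; linarith
  have hb := Real.exp_bound hx (n := 8) (by norm_num)
  have h1 : Real.exp (c/8) ≤ u := by
    have h2 := (abs_le.mp hb).2
    rw [abs_of_nonneg (by positivity)] at h2
    norm_num [Nat.factorial] at h2 hu
    linarith
  calc Real.exp c = Real.exp (c/8) ^ 8 := by
        rw [← Real.exp_nat_mul]; congr 1; ring
    _ ≤ u^8 := pow_le_pow_left₀ (Real.exp_pos _).le h1 8

lemma le_exp_neg_of (c U r : ℝ) (hc : Real.exp c ≤ U) (hr : 0 ≤ r) (h1 : r * U ≤ 1) :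
    r ≤ Real.exp (-c) := by
  rw [Real.exp_neg]
  have hpos := Real.exp_pos c
  have h2 : r * Real.exp c ≤ 1 := le_trans (by nlinarith) h1
  nlinarith [mul_inv_cancel₀ (ne_of_gt hpos), inv_pos.2 hpos]

lemma phi_nonneg (s : ℝ) : 0 ≤ 1 - (1+s) * Real.exp (-s) := by
  have h := Real.add_one_le_exp s
  have h2 : (1+s) * Real.exp (-s) ≤ Real.exp s * Real.exp (-s) := by
    nlinarith [Real.exp_pos (-s)]
  rw [← Real.exp_add] at h2
  simp at h2
  linarith

-- generic interval step, to be instantiated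
lemma interval_step (a b c r : ℝ) (hr : r ≤ Real.exp (-c)) (hr0 : 0 ≤ r)
    (ha0 : 0 ≤ a) (hcb : b ≤ 1 + c)
    (hquart : ∀ s : ℝ, a ≤ s → s ≤ b → (1 - (1+s) * (r * (1+c-s)))^2 ≤ 0.2147 * s)
    (s : ℝ) (ha : a ≤ s) (hb : s ≤ b) :
    (1 - (1+s) * Real.exp (-s))^2 ≤ 0.2147 * s := by
  have h0s : 0 ≤ 1 + c - s := by linarith
  have hlin : r * (1+c-s) ≤ Real.exp (-s) := by
    have h1 : r * (1+c-s) ≤ Real.exp (-c) * (1+c-s) :=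
      mul_le_mul_of_nonneg_right hr h0s
    have h2 : Real.exp (-c) * (1 + (c - s)) ≤ Real.exp (-c) * Real.exp (c-s) := by
      have := Real.add_one_le_exp (c-s)
      nlinarith [Real.exp_pos (-c)]
    rw [← Real.exp_add] at h2
    have : -c + (c - s) = -s := by ring
    rw [this] at h2
    calc r * (1+c-s) ≤ Real.exp (-c) * (1+c-s) := h1
      _ = Real.exp (-c) * (1 + (c-s)) := by ring_nf
      _ ≤ Real.exp (-s) := h2
  have hφ0 := phi_nonneg s
  have hφle : 1 - (1+s) * Real.exp (-s) ≤ 1 - (1+s) * (r * (1+c-s)) := by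
    have h1s : (0:ℝ) ≤ 1 + s := by linarith
    nlinarith [mul_le_mul_of_nonneg_left hlin h1s]
  calc (1 - (1+s) * Real.exp (-s))^2 ≤ (1 - (1+s) * (r * (1+c-s)))^2 := by
        rw [sq, sq]; exact mul_self_le_mul_self hφ0 hφle
    _ ≤ 0.2147 * s := hquart s ha hb

lemma quart0 : ∀ s : ℝ, (59/100 : ℝ) ≤ s → s ≤ (159/100 : ℝ) →
    (1 - (1+s) * ((336216493/1000000000 : ℝ) * (1+(109/100 : ℝ)-s)))^2 ≤ 0.2147 * s := by
  intro s ha hb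
  nlinarith [mul_nonneg (sub_nonneg.2 ha) (sub_nonneg.2 hb), sq_nonneg (s - (109/100 : ℝ)),
    sq_nonneg ((s - (109/100 : ℝ))*(s-(59/100 : ℝ))), sq_nonneg ((s - (109/100 : ℝ))*((159/100 : ℝ)-s)),
    mul_nonneg (mul_nonneg (sub_nonneg.2 ha) (sub_nonneg.2 hb)) (sq_nonneg (s - (109/100 : ℝ)))]

lemma step0 : ∀ s : ℝ, (59/100 : ℝ) ≤ s → s ≤ (159/100 : ℝ) →
    (1 - (1+s) * Real.exp (-s))^2 ≤ 0.2147 * s := by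
  have hr : (336216493/1000000000 : ℝ) ≤ Real.exp (-(109/100 : ℝ)) :=
    le_exp_neg_of (109/100 : ℝ) (((9167746799/8000000000 : ℝ))^8) (336216493/1000000000 : ℝ)
      (exp_le_aux (109/100 : ℝ) (9167746799/8000000000 : ℝ) (by norm_num) (by norm_num)
        (by norm_num [Finset.sum_range_succ, Nat.factorial]))
      (by norm_num) (by norm_num)
  exact interval_step (59/100 : ℝ) (159/100 : ℝ) (109/100 : ℝ) (336216493/1000000000 : ℝ) hr (by norm_num) (by norm_num)
    (by norm_num) quart0


lemma quart1 : ∀ s : ℝ, (159/100 : ℝ) ≤ s → s ≤ (219/100 : ℝ) →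
    (1 - (1+s) * ((2360497/15625000 : ℝ) * (1+(189/100 : ℝ)-s)))^2 ≤ 0.2147 * s := by
  intro s ha hb
  nlinarith [mul_nonneg (sub_nonneg.2 ha) (sub_nonneg.2 hb), sq_nonneg (s - (189/100 : ℝ)),
    sq_nonneg ((s - (189/100 : ℝ))*(s-(159/100 : ℝ))), sq_nonneg ((s - (189/100 : ℝ))*((219/100 : ℝ)-s)),
    mul_nonneg (mul_nonneg (sub_nonneg.2 ha) (sub_nonneg.2 hb)) (sq_nonneg (s - (189/100 : ℝ)))]

lemma step1 : ∀ s : ℝ, (159/100 : ℝ) ≤ s → s ≤ (219/100 : ℝ) →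
    (1 - (1+s) * Real.exp (-s))^2 ≤ 0.2147 * s := by
  have hr : (2360497/15625000 : ℝ) ≤ Real.exp (-(189/100 : ℝ)) :=
    le_exp_neg_of (189/100 : ℝ) (((63324544667/50000000000 : ℝ))^8) (2360497/15625000 : ℝ)
      (exp_le_aux (189/100 : ℝ) (63324544667/50000000000 : ℝ) (by norm_num) (by norm_num)
        (by norm_num [Finset.sum_range_succ, Nat.factorial]))
      (by norm_num) (by norm_num)
  exact interval_step (159/100 : ℝ) (219/100 : ℝ) (189/100 : ℝ) (2360497/15625000 : ℝ) hr (by norm_num) (by norm_num)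
    (by norm_num) quart1


lemma quart2 : ∀ s : ℝ, (219/100 : ℝ) ≤ s → s ≤ (269/100 : ℝ) →
    (1 - (1+s) * ((87160851/1000000000 : ℝ) * (1+(61/25 : ℝ)-s)))^2 ≤ 0.2147 * s := by
  intro s ha hb
  nlinarith [mul_nonneg (sub_nonneg.2 ha) (sub_nonneg.2 hb), sq_nonneg (s - (61/25 : ℝ)),
    sq_nonneg ((s - (61/25 : ℝ))*(s-(219/100 : ℝ))), sq_nonneg ((s - (61/25 : ℝ))*((269/100 : ℝ)-s)),
    mul_nonneg (mul_nonneg (sub_nonneg.2 ha) (sub_nonneg.2 hb)) (sq_nonneg (s - (61/25 : ℝ)))]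

lemma step2 : ∀ s : ℝ, (219/100 : ℝ) ≤ s → s ≤ (269/100 : ℝ) →
    (1 - (1+s) * Real.exp (-s))^2 ≤ 0.2147 * s := by
  have hr : (87160851/1000000000 : ℝ) ≤ Real.exp (-(61/25 : ℝ)) :=
    le_exp_neg_of (61/25 : ℝ) (((678312501587/500000000000 : ℝ))^8) (87160851/1000000000 : ℝ)
      (exp_le_aux (61/25 : ℝ) (678312501587/500000000000 : ℝ) (by norm_num) (by norm_num)
        (by norm_num [Finset.sum_range_succ, Nat.factorial]))
      (by norm_num) (by norm_num)
  exact interval_step (219/100 : ℝ) (269/100 : ℝ) (61/25 : ℝ) (87160851/1000000000 : ℝ) hr (by norm_num) (by norm_num)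
    (by norm_num) quart2


lemma quart3 : ∀ s : ℝ, (269/100 : ℝ) ≤ s → s ≤ (147/50 : ℝ) →
    (1 - (1+s) * ((29802971/500000000 : ℝ) * (1+(141/50 : ℝ)-s)))^2 ≤ 0.2147 * s := by
  intro s ha hb
  nlinarith [mul_nonneg (sub_nonneg.2 ha) (sub_nonneg.2 hb), sq_nonneg (s - (141/50 : ℝ)),
    sq_nonneg ((s - (141/50 : ℝ))*(s-(269/100 : ℝ))), sq_nonneg ((s - (141/50 : ℝ))*((147/50 : ℝ)-s)),
    mul_nonneg (mul_nonneg (sub_nonneg.2 ha) (sub_nonneg.2 hb)) (sq_nonneg (s - (141/50 : ℝ)))]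

lemma step3 : ∀ s : ℝ, (269/100 : ℝ) ≤ s → s ≤ (147/50 : ℝ) →
    (1 - (1+s) * Real.exp (-s))^2 ≤ 0.2147 * s := by
  have hr : (29802971/500000000 : ℝ) ≤ Real.exp (-(141/50 : ℝ)) :=
    le_exp_neg_of (141/50 : ℝ) (((177827457031/125000000000 : ℝ))^8) (29802971/500000000 : ℝ)
      (exp_le_aux (141/50 : ℝ) (177827457031/125000000000 : ℝ) (by norm_num) (by norm_num)
        (by norm_num [Finset.sum_range_succ, Nat.factorial]))
      (by norm_num) (by norm_num)
  exact interval_step (269/100 : ℝ) (147/50 : ℝ) (141/50 : ℝ) (29802971/500000000 : ℝ) hr (by norm_num) (by norm_num)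
    (by norm_num) quart3


lemma quart4 : ∀ s : ℝ, (147/50 : ℝ) ≤ s → s ≤ (309/100 : ℝ) →
    (1 - (1+s) * ((24400609/500000000 : ℝ) * (1+(151/50 : ℝ)-s)))^2 ≤ 0.2147 * s := by
  intro s ha hb
  nlinarith [mul_nonneg (sub_nonneg.2 ha) (sub_nonneg.2 hb), sq_nonneg (s - (151/50 : ℝ)),
    sq_nonneg ((s - (151/50 : ℝ))*(s-(147/50 : ℝ))), sq_nonneg ((s - (151/50 : ℝ))*((309/100 : ℝ)-s)),
    mul_nonneg (mul_nonneg (sub_nonneg.2 ha) (sub_nonneg.2 hb)) (sq_nonneg (s - (151/50 : ℝ)))]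

lemma step4 : ∀ s : ℝ, (147/50 : ℝ) ≤ s → s ≤ (309/100 : ℝ) →
    (1 - (1+s) * Real.exp (-s))^2 ≤ 0.2147 * s := by
  have hr : (24400609/500000000 : ℝ) ≤ Real.exp (-(151/50 : ℝ)) :=
    le_exp_neg_of (151/50 : ℝ) (((364658361157/250000000000 : ℝ))^8) (24400609/500000000 : ℝ)
      (exp_le_aux (151/50 : ℝ) (364658361157/250000000000 : ℝ) (by norm_num) (by norm_num)
        (by norm_num [Finset.sum_range_succ, Nat.factorial]))
      (by norm_num) (by norm_num)
  exact interval_step (147/50 : ℝ) (309/100 : ℝ) (151/50 : ℝ) (24400609/500000000 : ℝ) hr (by norm_num) (by norm_num)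
    (by norm_num) quart4


lemma quart5 : ∀ s : ℝ, (309/100 : ℝ) ≤ s → s ≤ (63/20 : ℝ) →
    (1 - (1+s) * ((2759823/62500000 : ℝ) * (1+(78/25 : ℝ)-s)))^2 ≤ 0.2147 * s := by
  intro s ha hb
  nlinarith [mul_nonneg (sub_nonneg.2 ha) (sub_nonneg.2 hb), sq_nonneg (s - (78/25 : ℝ)),
    sq_nonneg ((s - (78/25 : ℝ))*(s-(309/100 : ℝ))), sq_nonneg ((s - (78/25 : ℝ))*((63/20 : ℝ)-s)),
    mul_nonneg (mul_nonneg (sub_nonneg.2 ha) (sub_nonneg.2 hb)) (sq_nonneg (s - (78/25 : ℝ)))]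

lemma step5 : ∀ s : ℝ, (309/100 : ℝ) ≤ s → s ≤ (63/20 : ℝ) →
    (1 - (1+s) * Real.exp (-s))^2 ≤ 0.2147 * s := by
  have hr : (2759823/62500000 : ℝ) ≤ Real.exp (-(78/25 : ℝ)) :=
    le_exp_neg_of (78/25 : ℝ) (((23077824921/15625000000 : ℝ))^8) (2759823/62500000 : ℝ)
      (exp_le_aux (78/25 : ℝ) (23077824921/15625000000 : ℝ) (by norm_num) (by norm_num)
        (by norm_num [Finset.sum_range_succ, Nat.factorial]))
      (by norm_num) (by norm_num)
  exact interval_step (309/100 : ℝ) (63/20 : ℝ) (78/25 : ℝ) (2759823/62500000 : ℝ) hr (by norm_num) (by norm_num)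
    (by norm_num) quart5


lemma quart6 : ∀ s : ℝ, (63/20 : ℝ) ≤ s → s ≤ (16/5 : ℝ) →
    (1 - (1+s) * ((20792827/500000000 : ℝ) * (1+(159/50 : ℝ)-s)))^2 ≤ 0.2147 * s := by
  intro s ha hb
  nlinarith [mul_nonneg (sub_nonneg.2 ha) (sub_nonneg.2 hb), sq_nonneg (s - (159/50 : ℝ)),
    sq_nonneg ((s - (159/50 : ℝ))*(s-(63/20 : ℝ))), sq_nonneg ((s - (159/50 : ℝ))*((16/5 : ℝ)-s)),
    mul_nonneg (mul_nonneg (sub_nonneg.2 ha) (sub_nonneg.2 hb)) (sq_nonneg (s - (159/50 : ℝ)))]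

lemma step6 : ∀ s : ℝ, (63/20 : ℝ) ≤ s → s ≤ (16/5 : ℝ) →
    (1 - (1+s) * Real.exp (-s))^2 ≤ 0.2147 * s := by
  have hr : (20792827/500000000 : ℝ) ≤ Real.exp (-(159/50 : ℝ)) :=
    le_exp_neg_of (159/50 : ℝ) (((1488099795189/1000000000000 : ℝ))^8) (20792827/500000000 : ℝ)
      (exp_le_aux (159/50 : ℝ) (1488099795189/1000000000000 : ℝ) (by norm_num) (by norm_num)
        (by norm_num [Finset.sum_range_succ, Nat.factorial]))
      (by norm_num) (by norm_num)
  exact interval_step (63/20 : ℝ) (16/5 : ℝ) (159/50 : ℝ) (20792827/500000000 : ℝ) hr (by norm_num) (by norm_num)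
    (by norm_num) quart6


lemma quart7 : ∀ s : ℝ, (16/5 : ℝ) ≤ s → s ≤ (13/4 : ℝ) →
    (1 - (1+s) * ((39955057/1000000000 : ℝ) * (1+(161/50 : ℝ)-s)))^2 ≤ 0.2147 * s := by
  intro s ha hb
  nlinarith [mul_nonneg (sub_nonneg.2 ha) (sub_nonneg.2 hb), sq_nonneg (s - (161/50 : ℝ)),
    sq_nonneg ((s - (161/50 : ℝ))*(s-(16/5 : ℝ))), sq_nonneg ((s - (161/50 : ℝ))*((13/4 : ℝ)-s)),
    mul_nonneg (mul_nonneg (sub_nonneg.2 ha) (sub_nonneg.2 hb)) (sq_nonneg (s - (161/50 : ℝ)))]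

lemma step7 : ∀ s : ℝ, (16/5 : ℝ) ≤ s → s ≤ (13/4 : ℝ) →
    (1 - (1+s) * Real.exp (-s))^2 ≤ 0.2147 * s := by
  have hr : (39955057/1000000000 : ℝ) ≤ Real.exp (-(161/50 : ℝ)) :=
    le_exp_neg_of (161/50 : ℝ) (((299111785313/200000000000 : ℝ))^8) (39955057/1000000000 : ℝ)
      (exp_le_aux (161/50 : ℝ) (299111785313/200000000000 : ℝ) (by norm_num) (by norm_num)
        (by norm_num [Finset.sum_range_succ, Nat.factorial]))
      (by norm_num) (by norm_num)
  exact interval_step (16/5 : ℝ) (13/4 : ℝ) (161/50 : ℝ) (39955057/1000000000 : ℝ) hr (by norm_num) (by norm_num)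
    (by norm_num) quart7


lemma quart8 : ∀ s : ℝ, (13/4 : ℝ) ≤ s → s ≤ (331/100 : ℝ) →
    (1 - (1+s) * ((1175883/31250000 : ℝ) * (1+(82/25 : ℝ)-s)))^2 ≤ 0.2147 * s := by
  intro s ha hb
  nlinarith [mul_nonneg (sub_nonneg.2 ha) (sub_nonneg.2 hb), sq_nonneg (s - (82/25 : ℝ)),
    sq_nonneg ((s - (82/25 : ℝ))*(s-(13/4 : ℝ))), sq_nonneg ((s - (82/25 : ℝ))*((331/100 : ℝ)-s)),
    mul_nonneg (mul_nonneg (sub_nonneg.2 ha) (sub_nonneg.2 hb)) (sq_nonneg (s - (82/25 : ℝ)))]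

lemma step8 : ∀ s : ℝ, (13/4 : ℝ) ≤ s → s ≤ (331/100 : ℝ) →
    (1 - (1+s) * Real.exp (-s))^2 ≤ 0.2147 * s := by
  have hr : (1175883/31250000 : ℝ) ≤ Real.exp (-(82/25 : ℝ)) :=
    le_exp_neg_of (82/25 : ℝ) (((188352223331/125000000000 : ℝ))^8) (1175883/31250000 : ℝ)
      (exp_le_aux (82/25 : ℝ) (188352223331/125000000000 : ℝ) (by norm_num) (by norm_num)
        (by norm_num [Finset.sum_range_succ, Nat.factorial]))
      (by norm_num) (by norm_num)
  exact interval_step (13/4 : ℝ) (331/100 : ℝ) (82/25 : ℝ) (1175883/31250000 : ℝ) hr (by norm_num) (by norm_num)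
    (by norm_num) quart8


lemma quart9 : ∀ s : ℝ, (331/100 : ℝ) ≤ s → s ≤ (173/50 : ℝ) →
    (1 - (1+s) * ((17023727/500000000 : ℝ) * (1+(169/50 : ℝ)-s)))^2 ≤ 0.2147 * s := by
  intro s ha hb
  nlinarith [mul_nonneg (sub_nonneg.2 ha) (sub_nonneg.2 hb), sq_nonneg (s - (169/50 : ℝ)),
    sq_nonneg ((s - (169/50 : ℝ))*(s-(331/100 : ℝ))), sq_nonneg ((s - (169/50 : ℝ))*((173/50 : ℝ)-s)),
    mul_nonneg (mul_nonneg (sub_nonneg.2 ha) (sub_nonneg.2 hb)) (sq_nonneg (s - (169/50 : ℝ)))]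

lemma step9 : ∀ s : ℝ, (331/100 : ℝ) ≤ s → s ≤ (173/50 : ℝ) →
    (1 - (1+s) * Real.exp (-s))^2 ≤ 0.2147 * s := by
  have hr : (17023727/500000000 : ℝ) ≤ Real.exp (-(169/50 : ℝ)) :=
    le_exp_neg_of (169/50 : ℝ) (((762885610759/500000000000 : ℝ))^8) (17023727/500000000 : ℝ)
      (exp_le_aux (169/50 : ℝ) (762885610759/500000000000 : ℝ) (by norm_num) (by norm_num)
        (by norm_num [Finset.sum_range_succ, Nat.factorial]))
      (by norm_num) (by norm_num)
  exact interval_step (331/100 : ℝ) (173/50 : ℝ) (169/50 : ℝ) (17023727/500000000 : ℝ) hr (by norm_num) (by norm_num)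
    (by norm_num) quart9


lemma quart10 : ∀ s : ℝ, (173/50 : ℝ) ≤ s → s ≤ (94/25 : ℝ) →
    (1 - (1+s) * ((13525923/500000000 : ℝ) * (1+(361/100 : ℝ)-s)))^2 ≤ 0.2147 * s := by
  intro s ha hb
  nlinarith [mul_nonneg (sub_nonneg.2 ha) (sub_nonneg.2 hb), sq_nonneg (s - (361/100 : ℝ)),
    sq_nonneg ((s - (361/100 : ℝ))*(s-(173/50 : ℝ))), sq_nonneg ((s - (361/100 : ℝ))*((94/25 : ℝ)-s)),
    mul_nonneg (mul_nonneg (sub_nonneg.2 ha) (sub_nonneg.2 hb)) (sq_nonneg (s - (361/100 : ℝ)))]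

lemma step10 : ∀ s : ℝ, (173/50 : ℝ) ≤ s → s ≤ (94/25 : ℝ) →
    (1 - (1+s) * Real.exp (-s))^2 ≤ 0.2147 * s := by
  have hr : (13525923/500000000 : ℝ) ≤ Real.exp (-(361/100 : ℝ)) :=
    le_exp_neg_of (361/100 : ℝ) (((1570273804569/1000000000000 : ℝ))^8) (13525923/500000000 : ℝ)
      (exp_le_aux (361/100 : ℝ) (1570273804569/1000000000000 : ℝ) (by norm_num) (by norm_num)
        (by norm_num [Finset.sum_range_succ, Nat.factorial]))
      (by norm_num) (by norm_num)
  exact interval_step (173/50 : ℝ) (94/25 : ℝ) (361/100 : ℝ) (13525923/500000000 : ℝ) hr (by norm_num) (by norm_num)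
    (by norm_num) quart10


lemma quart11 : ∀ s : ℝ, (94/25 : ℝ) ≤ s → s ≤ (14/3 : ℝ) →
    (1 - (1+s) * ((14846367/1000000000 : ℝ) * (1+(421/100 : ℝ)-s)))^2 ≤ 0.2147 * s := by
  intro s ha hb
  nlinarith [mul_nonneg (sub_nonneg.2 ha) (sub_nonneg.2 hb), sq_nonneg (s - (421/100 : ℝ)),
    sq_nonneg ((s - (421/100 : ℝ))*(s-(94/25 : ℝ))), sq_nonneg ((s - (421/100 : ℝ))*((14/3 : ℝ)-s)),
    mul_nonneg (mul_nonneg (sub_nonneg.2 ha) (sub_nonneg.2 hb)) (sq_nonneg (s - (421/100 : ℝ)))]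

lemma step11 : ∀ s : ℝ, (94/25 : ℝ) ≤ s → s ≤ (14/3 : ℝ) →
    (1 - (1+s) * Real.exp (-s))^2 ≤ 0.2147 * s := by
  have hr : (14846367/1000000000 : ℝ) ≤ Real.exp (-(421/100 : ℝ)) :=
    le_exp_neg_of (421/100 : ℝ) (((423143313099/250000000000 : ℝ))^8) (14846367/1000000000 : ℝ)
      (exp_le_aux (421/100 : ℝ) (423143313099/250000000000 : ℝ) (by norm_num) (by norm_num)
        (by norm_num [Finset.sum_range_succ, Nat.factorial]))
      (by norm_num) (by norm_num)
  exact interval_step (94/25 : ℝ) (14/3 : ℝ) (421/100 : ℝ) (14846367/1000000000 : ℝ) hr (by norm_num) (by norm_num)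
    (by norm_num) quart11


lemma key2 : ∀ s : ℝ, 0 ≤ s → s ≤ (14/3 : ℝ) →
    (1 - (1+s) * Real.exp (-s))^2 ≤ 0.2147 * s := by
  intro s hs0 hs14
  rcases le_or_gt s (59/100 : ℝ) with h0 | h0
  · refine interval_step 0 (59/100) 0 1 (by simp) (by norm_num) (by norm_num) (by norm_num)
      (fun s ha hb => by nlinarith [mul_nonneg ha (sub_nonneg.2 hb), sq_nonneg s]) s hs0 h0
  rcases le_or_gt s (159/100 : ℝ) with h1 | h1
  · exact step0 s h0.le h1
  rcases le_or_gt s (219/100 : ℝ) with h2 | h2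
  · exact step1 s h1.le h2
  rcases le_or_gt s (269/100 : ℝ) with h3 | h3
  · exact step2 s h2.le h3
  rcases le_or_gt s (147/50 : ℝ) with h4 | h4
  · exact step3 s h3.le h4
  rcases le_or_gt s (309/100 : ℝ) with h5 | h5
  · exact step4 s h4.le h5
  rcases le_or_gt s (63/20 : ℝ) with h6 | h6
  · exact step5 s h5.le h6
  rcases le_or_gt s (16/5 : ℝ) with h7 | h7
  · exact step6 s h6.le h7
  rcases le_or_gt s (13/4 : ℝ) with h8 | h8
  · exact step7 s h7.le h8
  rcases le_or_gt s (331/100 : ℝ) with h9 | h9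
  · exact step8 s h8.le h9
  rcases le_or_gt s (173/50 : ℝ) with h10 | h10
  · exact step9 s h9.le h10
  rcases le_or_gt s (94/25 : ℝ) with h11 | h11
  · exact step10 s h10.le h11
  exact step11 s h11.le hs14
lemma scalar_key : ∀ s : ℝ, 0 ≤ s →
    0 ≤ (1.2147 : ℝ) * (1 + s)⁻¹ -
      (Real.exp (-(2 * s)) + pinvFun s * (1 - Real.exp (-s)) ^ 2) := by
  intro s hs
  rcases eq_or_lt_of_le hs with h | h
  · subst h
    simp [pinvFun, Real.exp_zero]
    norm_num
  · have key : (1 - (1+s) * Real.exp (-s))^2 ≤ 0.2147 * s := by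
      rcases le_or_gt s (14/3 : ℝ) with h14 | h14
      · exact key2 s hs h14
      · have h0 := phi_nonneg s
        have hlt : 0 < (1+s) * Real.exp (-s) := by positivity
        nlinarith
    have hexp2 : Real.exp (-(2*s)) = Real.exp (-s) * Real.exp (-s) := by
      rw [← Real.exp_add]; ring_nf
    have hpv : pinvFun s = s⁻¹ := by simp [pinvFun, ne_of_gt h]
    rw [hexp2, hpv]
    have expand : ((1.2147:ℝ)*(1+s)⁻¹ -
        (Real.exp (-s)*Real.exp (-s) + s⁻¹*(1-Real.exp (-s))^2)) * (s*(1+s))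
        = 0.2147*s - (1-(1+s)*Real.exp (-s))^2 := by
      field_simp
      ring
    have h3 : 0 ≤ ((1.2147:ℝ)*(1+s)⁻¹ -
        (Real.exp (-s)*Real.exp (-s) + s⁻¹*(1-Real.exp (-s))^2)) * (s*(1+s)) := by
      rw [expand]; linarith
    have hpos : 0 < s*(1+s) := by positivity
    nlinarith [h3, hpos]



/-- `Xp` is the Moore–Penrose pseudoinverse of `X`, expressed via the four
Penrose conditions. -/
def IsMoorePenroseInv {p : ℕ} (X Xp : Matrix (Fin p) (Fin p) ℝ) : Prop :=
  X * Xp * X = X ∧ Xp * X * Xp = Xp ∧ (X * Xp)ᵀ = X * Xp ∧ (Xp * X)ᵀ = Xp * X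

lemma mp_unique {p : ℕ} (X A B : Matrix (Fin p) (Fin p) ℝ)
    (hA : IsMoorePenroseInv X A) (hB : IsMoorePenroseInv X B) : A = B := by
  obtain ⟨hA1, hA2, hA3, hA4⟩ := hA
  obtain ⟨hB1, hB2, hB3, hB4⟩ := hB
  have h2 : Xᵀ = Xᵀ * Bᵀ * Xᵀ := by
    conv_lhs => rw [← hB1]
    simp [transpose_mul, Matrix.mul_assoc]
  have hXA : X * A = X * B := by
    calc X * A = Aᵀ * Xᵀ := by rw [← transpose_mul, hA3]
      _ = Aᵀ * (Xᵀ * Bᵀ * Xᵀ) := by rw [← h2]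
      _ = (Aᵀ * Xᵀ) * (Bᵀ * Xᵀ) := by simp [Matrix.mul_assoc]
      _ = (X * A)ᵀ * (X * B)ᵀ := by rw [← transpose_mul, ← transpose_mul]
      _ = (X * A) * (X * B) := by rw [hA3, hB3]
      _ = (X * A * X) * B := by simp [Matrix.mul_assoc]
      _ = X * B := by rw [hA1]
  have hAX : A * X = B * X := by
    calc A * X = Xᵀ * Aᵀ := by rw [← transpose_mul, hA4]
      _ = Xᵀ * Bᵀ * Xᵀ * Aᵀ := by rw [← h2]
      _ = (Xᵀ * Bᵀ) * (Xᵀ * Aᵀ) := by simp [Matrix.mul_assoc]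
      _ = (B * X)ᵀ * (A * X)ᵀ := by rw [← transpose_mul, ← transpose_mul]
      _ = (B * X) * (A * X) := by rw [hB4, hA4]
      _ = B * (X * A * X) := by simp [Matrix.mul_assoc]
      _ = B * X := by rw [hA1]
  calc A = A * X * A := hA2.symm
    _ = A * (X * B) := by rw [Matrix.mul_assoc, hXA]
    _ = (B * X) * B := by rw [← Matrix.mul_assoc, hAX]
    _ = B := hB2

theorem exp_add_pinv_loewner_le {p : ℕ} (X Xp : Matrix (Fin p) (Fin p) ℝ)
    (hX : X.PosSemidef) (hXp : IsMoorePenroseInv X Xp) :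
    ((1.2147 : ℝ) • (1 + X)⁻¹
      - (NormedSpace.exp (-((2 : ℝ) • X))
          + Xp * (1 - NormedSpace.exp (-X)) ^ 2)).PosSemidef := by
  classical
  have hH : X.IsHermitian := hX.1
  set V : Matrix (Fin p) (Fin p) ℝ := (hH.eigenvectorUnitary : Matrix (Fin p) (Fin p) ℝ) with hV
  set μ : Fin p → ℝ := hH.eigenvalues with hμ
  have hμ0 : ∀ i, 0 ≤ μ i := hX.eigenvalues_nonneg
  have hVsV : V * star V = 1 := (Matrix.mem_unitaryGroup_iff).mp hH.eigenvectorUnitary.2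
  have hsVV : star V * V = 1 := (Matrix.mem_unitaryGroup_iff').mp hH.eigenvectorUnitary.2
  have hUnit : IsUnit V := ⟨⟨V, star V, hVsV, hsVV⟩, rfl⟩
  have hVinv : V⁻¹ = star V := inv_eq_right_inv hVsV
  have cmul : ∀ A B : Matrix (Fin p) (Fin p) ℝ,
      (V * A * star V) * (V * B * star V) = V * (A * B) * star V := by
    intro A B
    calc (V * A * star V) * (V * B * star V)
        = V * A * (star V * V) * (B * star V) := by simp [Matrix.mul_assoc]
      _ = V * (A * B) * star V := by rw [hsVV]; simp [Matrix.mul_assoc]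
  have cone : V * (1 : Matrix (Fin p) (Fin p) ℝ) * star V = 1 := by
    rw [Matrix.mul_one]; exact hVsV
  have cadd : ∀ A B : Matrix (Fin p) (Fin p) ℝ,
      (V * A * star V) + (V * B * star V) = V * (A + B) * star V := by
    intro A B; rw [Matrix.mul_add, Matrix.add_mul]
  have csub : ∀ A B : Matrix (Fin p) (Fin p) ℝ,
      (V * A * star V) - (V * B * star V) = V * (A - B) * star V := by
    intro A B; rw [Matrix.mul_sub, Matrix.sub_mul]
  have csmul : ∀ (r : ℝ) (A : Matrix (Fin p) (Fin p) ℝ),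
      r • (V * A * star V) = V * (r • A) * star V := by
    intro r A; rw [Matrix.mul_smul, Matrix.smul_mul]
  -- spectral decomposition
  have hXd : X = V * diagonal μ * star V := by
    have := hH.spectral_theorem
    simpa [hV, hμ, RCLike.ofReal_real_eq_id] using this
  -- exp(-X)
  have hExpX : NormedSpace.exp (-X) = V * diagonal (fun i => Real.exp (-μ i)) * star V := by
    have h1 : -X = V * diagonal (fun i => -μ i) * star V := by
      rw [hXd]
      rw [show diagonal (fun i => -μ i) = -diagonal μ from by simp [Matrix.diagonal_neg]]
      rw [Matrix.mul_neg, Matrix.neg_mul]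
    rw [h1, ← hVinv, Matrix.exp_conj V _ hUnit, Matrix.exp_diagonal]
    congr 2
    rw [Pi.exp_def]
    funext i
    rw [← Real.exp_eq_exp_ℝ]
  -- exp(-2X)
  have hExp2X : NormedSpace.exp (-((2:ℝ) • X))
      = V * diagonal (fun i => Real.exp (-(2 * μ i))) * star V := by
    have hfun2 : (fun i => -(2 * μ i)) = (-(2:ℝ)) • μ :=
      funext fun i => by simp [Pi.smul_apply, smul_eq_mul]
    have hd2 : diagonal (fun i => -(2 * μ i)) = (-(2:ℝ)) • diagonal μ := by
      rw [hfun2, Matrix.diagonal_smul]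
    have h1 : -((2:ℝ) • X) = V * diagonal (fun i => -(2 * μ i)) * star V := by
      rw [hXd, ← neg_smul, csmul, ← hd2]
    rw [h1, ← hVinv, Matrix.exp_conj V _ hUnit, Matrix.exp_diagonal]
    congr 2
    rw [Pi.exp_def]
    funext i
    rw [← Real.exp_eq_exp_ℝ]
  -- 1
  have hone : (1 : Matrix (Fin p) (Fin p) ℝ) = V * diagonal (fun _ => (1:ℝ)) * star V := by
    rw [show diagonal (fun _ : Fin p => (1:ℝ)) = 1 from Matrix.diagonal_one]
    exact cone.symm
  -- (1+X)⁻¹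
  have hInv : (1 + X)⁻¹ = V * diagonal (fun i => (1 + μ i)⁻¹) * star V := by
    have h1 : 1 + X = V * diagonal (fun i => 1 + μ i) * star V := by
      conv_lhs => rw [hone, hXd]
      rw [cadd]
      congr 2
      rw [Matrix.diagonal_add]
    apply inv_eq_right_inv
    rw [h1, cmul, diagonal_mul_diagonal]
    rw [show (fun i => (1 + μ i) * (1 + μ i)⁻¹) = fun _ => (1:ℝ) from
      funext fun i => mul_inv_cancel₀ (by nlinarith [hμ0 i])]
    rw [show diagonal (fun _ : Fin p => (1:ℝ)) = 1 from Matrix.diagonal_one]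
    exact cone
  -- Xp
  have hsymm : ∀ d : Fin p → ℝ, (V * diagonal d * star V)ᵀ = V * diagonal d * star V := by
    intro d
    have hstar : star V = Vᵀ := by
      rw [Matrix.star_eq_conjTranspose, Matrix.conjTranspose_eq_transpose_of_trivial]
    rw [hstar, Matrix.transpose_mul, Matrix.transpose_mul, Matrix.transpose_transpose,
      Matrix.diagonal_transpose, Matrix.mul_assoc]
  have hXpEq : Xp = V * diagonal (fun i => pinvFun (μ i)) * star V := by
    apply mp_unique X _ _ hXp
    refine ⟨?_, ?_, ?_, ?_⟩
    · conv_lhs => rw [hXd]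
      conv_rhs => rw [hXd]
      rw [cmul, cmul, diagonal_mul_diagonal, diagonal_mul_diagonal]
      congr 2
      exact congrArg Matrix.diagonal (funext fun i => by
        by_cases h : μ i = 0
        · simp [pinvFun, h]
        · simp [pinvFun, h])
    · conv_lhs => rw [hXd]
      rw [cmul, cmul, diagonal_mul_diagonal, diagonal_mul_diagonal]
      congr 2
      exact congrArg Matrix.diagonal (funext fun i => by
        by_cases h : μ i = 0
        · simp [pinvFun, h]
        · simp [pinvFun, h])
    · rw [hXd, cmul, diagonal_mul_diagonal]; exact hsymm _
    · rw [hXd, cmul, diagonal_mul_diagonal]; exact hsymm _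
  -- assemble
  have key : ((1.2147 : ℝ) • (1 + X)⁻¹
      - (NormedSpace.exp (-((2 : ℝ) • X)) + Xp * (1 - NormedSpace.exp (-X)) ^ 2))
      = V * diagonal (fun i => (1.2147 : ℝ) * (1 + μ i)⁻¹ -
          (Real.exp (-(2 * μ i)) + pinvFun (μ i) * (1 - Real.exp (-(μ i))) ^ 2)) * star V := by
    rw [hInv, hExp2X, hExpX, hXpEq]
    conv_lhs => rw [hone]
    rw [csub, sq, cmul, cmul, cadd, csmul, csub]
    congr 2
    rw [← Matrix.diagonal_smul, Matrix.diagonal_sub, diagonal_mul_diagonal,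
      diagonal_mul_diagonal, Matrix.diagonal_add, Matrix.diagonal_sub]
    exact congrArg Matrix.diagonal (funext fun i => by
      simp only [Pi.sub_apply, Pi.add_apply, Pi.smul_apply, smul_eq_mul]
      ring)
  rw [key]
  have hD : (diagonal (fun i => (1.2147 : ℝ) * (1 + μ i)⁻¹ -
      (Real.exp (-(2 * μ i)) + pinvFun (μ i) * (1 - Real.exp (-(μ i))) ^ 2))).PosSemidef := by
    rw [posSemidef_diagonal_iff]
    intro i
    exact scalar_key (μ i) (hμ0 i)
  have := hD.mul_mul_conjTranspose_same V
  simpa [Matrix.star_eq_conjTranspose] using this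
end

section
/- For every s ≥ 0, t > 0, α > 0, with the calibration λ = 1/t: |v^Tβ_0|^2 e^{-2ts} + (σ^2/n)(1-e^{-ts})^2/s ≤ 1.6862 · ( |v^Tβ_0|^2 (1/t)^2/((1/t)+s)^2 + (σ^2/n)·s/((1/t)+s)^2 ), for any real constants |v^Tβ_0|^2 ≥ 0 and σ^2/n > 0 (with the convention (1-e^{-x})^2/x = 0 at x = 0). -/
set_option maxHeartbeats 1000000

lemma exp_lower6 (y : ℝ) (hy : |y| ≤ 1) :
    1 - y + y^2/2 - y^3/6 + y^4/24 - y^5/120 - 7/4320*y^6 ≤ Real.exp (-y) := by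
  have h := Real.exp_bound (x := -y) (by rwa [abs_neg]) (n := 6) (by norm_num)
  rw [Finset.sum_range_succ, Finset.sum_range_succ, Finset.sum_range_succ,
    Finset.sum_range_succ, Finset.sum_range_succ, Finset.sum_range_succ] at h
  simp only [Nat.factorial] at h
  have habs : |(-y)| ^ 6 = y ^ 6 := by
    rw [abs_neg, ← abs_pow, abs_of_nonneg (by positivity)]
  rw [habs] at h
  have h2 := (abs_sub_le_iff.mp h).2
  push_cast at h2 ⊢
  nlinarith [h2]

lemma exp_neg_two_lb : (0.135335283 : ℝ) ≤ Real.exp (-2) := by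
  have h1 : Real.exp 1 < 2.7182818286 := Real.exp_one_lt_d9
  have h2 : Real.exp (-2) * (Real.exp 1 * Real.exp 1) = 1 := by
    rw [← Real.exp_add, ← Real.exp_add]; norm_num
  have h3 : (0:ℝ) < Real.exp 1 := Real.exp_pos 1
  nlinarith [Real.exp_pos (-2)]

lemma exp_neg_three_lb : (0.049787068 : ℝ) ≤ Real.exp (-3) := by
  have h1 : Real.exp 1 < 2.7182818286 := Real.exp_one_lt_d9
  have h2 : Real.exp (-3) * (Real.exp 1 * (Real.exp 1 * Real.exp 1)) = 1 := by
    rw [← Real.exp_add, ← Real.exp_add, ← Real.exp_add]; norm_num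
  have h3 : (0:ℝ) < Real.exp 1 := Real.exp_pos 1
  have h4 : Real.exp 1 * (Real.exp 1 * Real.exp 1) < 2.7182818286 * (2.7182818286 * 2.7182818286) := by
    nlinarith
  nlinarith [Real.exp_pos (-3)]

lemma key_ineq (x : ℝ) (hx : 0 ≤ x) :
    (1 + x) * (1 - Real.exp (-x)) ≤ 1.2985 * x := by
  rcases le_or_gt x 1 with h1 | h1
  · have hL := exp_lower6 x (by rw [abs_of_nonneg hx]; exact h1)
    have hstep : (1 + x) * (1 - Real.exp (-x)) ≤
        (1 + x) * (1 - (1 - x + x^2/2 - x^3/6 + x^4/24 - x^5/120 - 7/4320*x^6)) := by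
      have h0 : (0:ℝ) ≤ 1 + x := by linarith
      nlinarith [hL, h0]
    refine hstep.trans ?_
    nlinarith [mul_nonneg hx (by linarith : (0:ℝ) ≤ 1 - x), sq_nonneg x, sq_nonneg (x*x),
      sq_nonneg (x*x*x), mul_nonneg (mul_nonneg hx hx) (by linarith : (0:ℝ) ≤ 1 - x),
      mul_nonneg (mul_nonneg (mul_nonneg hx hx) (mul_nonneg hx hx)) (by linarith : (0:ℝ) ≤ 1 - x),
      mul_nonneg (mul_nonneg (mul_nonneg hx hx) hx) (by linarith : (0:ℝ) ≤ 1 - x)]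
  rcases le_or_gt x 3 with h3 | h3
  · obtain ⟨y, rfl⟩ : ∃ y, x = y + 2 := ⟨x - 2, by ring⟩
    have hy1 : -1 ≤ y := by linarith
    have hy2 : y ≤ 1 := by linarith
    have hyb : |y| ≤ 1 := abs_le.mpr ⟨hy1, hy2⟩
    have hL := exp_lower6 y hyb
    have hsplit : Real.exp (-(y + 2)) = Real.exp (-2) * Real.exp (-y) := by
      rw [← Real.exp_add]; ring_nf
    have hLpos : (0:ℝ) ≤ 1 - y + y^2/2 - y^3/6 + y^4/24 - y^5/120 - 7/4320*y^6 := by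
      nlinarith [sq_nonneg (2*y - 3), mul_nonneg (sq_nonneg y) (by linarith : (0:ℝ) ≤ 1-y),
        mul_nonneg (sq_nonneg (y*y)) (by linarith : (0:ℝ) ≤ 1-y),
        mul_nonneg (mul_nonneg (by linarith : (0:ℝ) ≤ 1+y) (by linarith : (0:ℝ) ≤ 1-y)) (sq_nonneg (y*y)),
        sq_nonneg y, sq_nonneg (y*y)]
    have hE : (0.135335283 : ℝ) * (1 - y + y^2/2 - y^3/6 + y^4/24 - y^5/120 - 7/4320*y^6)
        ≤ Real.exp (-(y + 2)) := by
      rw [hsplit]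
      exact mul_le_mul exp_neg_two_lb hL hLpos (Real.exp_pos _).le
    have hstep : (1 + (y + 2)) * (1 - Real.exp (-(y + 2))) ≤
        (1 + (y + 2)) * (1 - 0.135335283 * (1 - y + y^2/2 - y^3/6 + y^4/24 - y^5/120 - 7/4320*y^6)) := by
      have h0 : (0:ℝ) ≤ 1 + (y + 2) := by linarith
      nlinarith [hE, h0]
    refine hstep.trans ?_
    nlinarith [sq_nonneg (y + 0.2073), sq_nonneg ((y + 0.2073)*y), sq_nonneg ((y + 0.2073)*y^2),
      sq_nonneg ((y + 0.2073)*y^3),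
      mul_nonneg (by linarith : (0:ℝ) ≤ 1+y) (by linarith : (0:ℝ) ≤ 1-y),
      mul_nonneg (mul_nonneg (by linarith : (0:ℝ) ≤ 1+y) (by linarith : (0:ℝ) ≤ 1-y)) (sq_nonneg (y+0.2073)),
      sq_nonneg y, sq_nonneg (y*y), sq_nonneg (y*y*y)]
  rcases le_or_gt x 3.36 with h4 | h4
  · have hsplit : Real.exp (-x) = Real.exp (-3) * Real.exp (-(x-3)) := by
      rw [← Real.exp_add]; ring_nf
    have hlin : 1 - (x - 3) ≤ Real.exp (-(x-3)) := by
      have := Real.add_one_le_exp (-(x-3)); linarith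
    have hE : (0.049787068 : ℝ) * (1 - (x-3)) ≤ Real.exp (-x) := by
      rw [hsplit]
      exact mul_le_mul exp_neg_three_lb hlin (by linarith) (Real.exp_pos _).le
    nlinarith [hE]
  · have := (Real.exp_pos (-x)).le
    nlinarith

theorem gf_ridge_summand_bound (s t c d : ℝ)
    (hs : 0 ≤ s) (ht : 0 < t) (hc : 0 ≤ c) (hd : 0 < d) :
    c * Real.exp (-2 * t * s) + d * ((1 - Real.exp (-(t * s))) ^ 2 / s) ≤
      1.6862 * (c * ((1 / t) ^ 2 / (1 / t + s) ^ 2) + d * (s / (1 / t + s) ^ 2)) := by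
  rcases eq_or_lt_of_le hs with rfl | hs'
  · simp [Real.exp_zero]
    rw [inv_mul_cancel₀ (by positivity : (t:ℝ)^2 ≠ 0)]
    nlinarith
  · set x := t * s with hxdef
    have hx : 0 < x := mul_pos ht hs'
    have hexp1 : Real.exp (-x) ≤ 1 / (1 + x) := by
      rw [le_div_iff₀ (by linarith)]
      have hme : Real.exp (-x) * Real.exp x = 1 := by rw [← Real.exp_add]; simp
      nlinarith [Real.add_one_le_exp x, (Real.exp_pos (-x)).le]
    have hA : Real.exp (-2 * t * s) ≤ (1 / t) ^ 2 / (1 / t + s) ^ 2 := by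
      have h1 : Real.exp (-2 * t * s) = Real.exp (-x) * Real.exp (-x) := by
        rw [← Real.exp_add, hxdef]; ring_nf
      have h2 : (1 / t) ^ 2 / (1 / t + s) ^ 2 = 1 / (1 + x) ^ 2 := by
        rw [hxdef, div_eq_div_iff (by positivity) (by positivity)]; field_simp
      rw [h1, h2]
      have he := (Real.exp_pos (-x)).le
      calc Real.exp (-x) * Real.exp (-x) ≤ (1/(1+x)) * (1/(1+x)) :=
            mul_le_mul hexp1 hexp1 he (by positivity)
        _ = 1 / (1+x)^2 := by rw [div_mul_div_comm, one_mul, sq]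
    have hkey := key_ineq x hx.le
    have hexpge : 0 ≤ 1 - Real.exp (-x) := by
      have : Real.exp (-x) ≤ 1 := Real.exp_le_one_iff.mpr (by linarith)
      linarith
    have hB : (1 - Real.exp (-(t * s))) ^ 2 / s ≤ 1.6862 * (s / (1 / t + s) ^ 2) := by
      rw [← hxdef]
      have h1x : (0:ℝ) < 1 + x := by linarith
      have hsq : ((1+x) * (1 - Real.exp (-x)))^2 ≤ (1.2985 * x)^2 := by
        have h0 : 0 ≤ (1+x) * (1 - Real.exp (-x)) := mul_nonneg h1x.le hexpge
        exact pow_le_pow_left₀ h0 hkey 2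
      have h2 : (1 - Real.exp (-x))^2 ≤ 1.6862 * x^2 / (1+x)^2 := by
        rw [le_div_iff₀ (by positivity)]
        nlinarith [hsq]
      have h3 : 1.6862 * (s / (1 / t + s) ^ 2) = 1.6862 * x^2 / (1+x)^2 / s := by
        rw [hxdef]
        field_simp
      rw [h3]
      exact (div_le_div_iff_of_pos_right hs').mpr h2
    have hcA := mul_le_mul_of_nonneg_left hA hc
    have hdB := mul_le_mul_of_nonneg_left hB hd.le
    have hApos : (0:ℝ) ≤ c * ((1 / t) ^ 2 / (1 / t + s) ^ 2) := by positivity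
    nlinarith [hcA, hdB, hApos]
end
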